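/- arXiv:1212.4099 — 4 statements merged into one kernel-verified Lean document; each statement's English description precedes it below -/
import Mathlib

section
/- Let (X, 𝒜, μ, T) be an exact measure-preserving system on a σ-finite measure space with μ(X) = ∞ (exactness: ⋂_{n≥0} T⁻ⁿ𝒜 is trivial mod μ). Then for every F ∈ L^∞(μ) and every g ∈ L¹(μ) with ∫ g dμ = 0, one has lim_{n→∞} ∫_X (F∘Tⁿ)·g dμ = 0. -/
/-!
Along an ultrafilter finer than `atTop`, the bounded functions `F ∘ Tⁿ` have a weak-* limit `v`
in `L^∞ = (L¹)^*`. For `k ≥ n` the function `F ∘ Tᵏ` is `T⁻ⁿ𝒜`-measurable, so pairing it with `f`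
or with `E[f | T⁻ⁿ𝒜]` gives the same number; in the limit this forces `v` to be
`T⁻ⁿ𝒜`-measurable for every `n`. Hence `v` is measurable for the tail σ-algebra, so by exactness
it is a.e. a constant `α`, and the limit of `∫ (F ∘ Tⁿ) g` along the ultrafilter is `α ∫ g = 0`.
The duality `(L¹)^* = L^∞` is obtained from the Riesz representation theorem on `L²` of a finite
measure equivalent to `μ`.
-/

open MeasureTheory Filter Topology

open scoped NNReal

section BoundedMultiplier

variable {X : Type*} {m : MeasurableSpace X} {μ : Measure X}

lemma abs_integral_mul_le_of_abs_le {φ f : X → ℝ} {C : ℝ} (hφ : ∀ x, |φ x| ≤ C)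
    (hf : Integrable f μ) : |∫ x, φ x * f x ∂μ| ≤ C * ∫ x, |f x| ∂μ := by
  rw [← integral_const_mul C fun x => |f x|]
  refine norm_integral_le_of_norm_le (f := fun x => φ x * f x) (hf.abs.const_mul C)
    (.of_forall fun x => ?_)
  rw [Real.norm_eq_abs, abs_mul]
  exact mul_le_mul_of_nonneg_right (hφ x) (abs_nonneg _)

lemma integral_mul_indicator_one (v : X → ℝ) {s : Set X} (hs : MeasurableSet s) :
    ∫ x, v x * s.indicator (fun _ => 1) x ∂μ = ∫ x in s, v x ∂μ := by
  simp_rw [← Set.indicator_mul_right, mul_one]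
  exact integral_indicator hs

lemma integral_mul_condExp_of_stronglyMeasurable {m₀ : MeasurableSpace X} {μ : Measure X}
    (hm : m ≤ m₀) [SigmaFinite (μ.trim hm)] {φ f : X → ℝ} {C : ℝ}
    (hφ : StronglyMeasurable[m] φ) (hφC : ∀ x, |φ x| ≤ C) (hf : Integrable f μ) :
    ∫ x, φ x * μ[f|m] x ∂μ = ∫ x, φ x * f x ∂μ := by
  have hφf : Integrable (φ * f) μ := hf.bdd_mul (hφ.mono hm).aestronglyMeasurable (.of_forall hφC)
  calc ∫ x, φ x * μ[f|m] x ∂μ = ∫ x, μ[φ * f|m] x ∂μ :=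
        integral_congr_ae (condExp_mul_of_stronglyMeasurable_left hφ hφf hf).symm
    _ = ∫ x, φ x * f x ∂μ := integral_condExp hm

end BoundedMultiplier

section FiniteMeasure

variable {X : Type*} {m : MeasurableSpace X} {μ : Measure X} [IsFiniteMeasure μ]

lemma integral_abs_le_measure_univ_rpow_mul_norm (u : Lp ℝ 2 μ) :
    ∫ x, |u x| ∂μ ≤ (μ Set.univ ^ (1 / 2 : ℝ)).toReal * ‖u‖ := by
  have h := eLpNorm_le_eLpNorm_mul_rpow_measure_univ (p := 1) (q := 2) one_le_two
    (Lp.aestronglyMeasurable u) (μ := μ)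
  norm_num at h
  have hne : eLpNorm u 2 μ * μ Set.univ ^ (1 / 2 : ℝ) ≠ ⊤ :=
    ENNReal.mul_ne_top (Lp.eLpNorm_ne_top u) (by finiteness)
  calc ∫ x, |u x| ∂μ = (eLpNorm u 1 μ).toReal := by
        rw [toReal_eLpNorm (Lp.aestronglyMeasurable u),
          lpNorm_one_eq_integral_norm (Lp.aestronglyMeasurable u)]
        rfl
    _ ≤ (eLpNorm u 2 μ * μ Set.univ ^ (1 / 2 : ℝ)).toReal := ENNReal.toReal_mono hne h
    _ = (μ Set.univ ^ (1 / 2 : ℝ)).toReal * ‖u‖ := by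
        rw [ENNReal.toReal_mul, mul_comm, Lp.norm_def]

lemma ae_abs_le_of_abs_setIntegral_le {w : X → ℝ} (hw : Integrable w μ) {C : ℝ}
    (h : ∀ s, MeasurableSet s → |∫ x in s, w x ∂μ| ≤ C * μ.real s) :
    ∀ᵐ x ∂μ, |w x| ≤ C := by
  have hle : ∀ w' : X → ℝ, Integrable w' μ →
      (∀ s, MeasurableSet s → ∫ x in s, w' x ∂μ ≤ C * μ.real s) → ∀ᵐ x ∂μ, w' x ≤ C :=
    fun w' hw' h' => ae_le_of_forall_setIntegral_le hw' (integrable_const C) fun s hs _ => by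
      rw [setIntegral_const, smul_eq_mul, mul_comm]
      exact h' s hs
  filter_upwards [hle w hw fun s hs => (le_abs_self _).trans (h s hs),
    hle (-w) hw.neg fun s hs => by
      simpa only [Pi.neg_apply, integral_neg] using (neg_le_abs _).trans (h s hs)]
    with x hx hx'
  exact abs_le.2 ⟨neg_le.1 hx', hx⟩

end FiniteMeasure

lemma MeasureTheory.AEStronglyMeasurable.exists_measurable_abs_le_ae_eq {X : Type*}
    {m : MeasurableSpace X} {μ : Measure X} {w : X → ℝ} (hw : AEStronglyMeasurable w μ) {C : ℝ}
    (hC : 0 ≤ C) (hwC : ∀ᵐ x ∂μ, |w x| ≤ C) :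
    ∃ v : X → ℝ, Measurable v ∧ (∀ x, |v x| ≤ C) ∧ w =ᵐ[μ] v := by
  have hCC : -C ≤ C := neg_le_self hC
  refine ⟨fun x => Set.projIcc (-C) C hCC (hw.mk w x),
    measurable_subtype_coe.comp
      (continuous_projIcc.measurable.comp hw.stronglyMeasurable_mk.measurable),
    fun x => abs_le.2 (Set.projIcc (-C) C hCC _).2, ?_⟩
  filter_upwards [hw.ae_eq_mk, hwC] with x hx hxC
  rw [← hx, Set.projIcc_of_mem hCC (abs_le.1 hxC)]

lemma Ultrafilter.tendsto_limUnder_of_abs_le {ι : Type*} (𝒰 : Ultrafilter ι) {u : ι → ℝ} {M : ℝ}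
    (hu : ∀ i, |u i| ≤ M) : Tendsto u 𝒰 (𝓝 (limUnder (𝒰 : Filter ι) u)) := by
  obtain ⟨a, -, ha⟩ := isCompact_Icc.ultrafilter_le_nhds' (𝒰.map u)
    (Filter.mem_map.2 (univ_mem' fun i => abs_le.1 (hu i)))
  exact tendsto_nhds_limUnder ⟨a, ha⟩

/-- A function-level model of an element of norm at most `C` in the dual of `L¹(μ)`: the values of
`Λ` off the integrable functions play no role. -/
structure IsBoundedL1Functional {X : Type*} {m : MeasurableSpace X} (μ : Measure X)
    (Λ : (X → ℝ) → ℝ) (C : ℝ) : Prop where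
  map_add : ∀ f g, Integrable f μ → Integrable g μ → Λ (f + g) = Λ f + Λ g
  map_smul : ∀ (c : ℝ) f, Integrable f μ → Λ (c • f) = c * Λ f
  abs_le : ∀ f, Integrable f μ → |Λ f| ≤ C * ∫ x, |f x| ∂μ

lemma isBoundedL1Functional_integral_mul {X : Type*} {m : MeasurableSpace X} {μ : Measure X}
    {v : X → ℝ} {C : ℝ} (hv : AEStronglyMeasurable v μ) (hvC : ∀ x, |v x| ≤ C) :
    IsBoundedL1Functional μ (fun f => ∫ x, v x * f x ∂μ) C where
  map_add f g hf hg := by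
    simp_rw [Pi.add_apply, mul_add]
    exact integral_add (hf.bdd_mul hv (.of_forall hvC)) (hg.bdd_mul hv (.of_forall hvC))
  map_smul c f _ := by
    simp_rw [Pi.smul_apply, smul_eq_mul, mul_left_comm _ c]
    exact integral_const_mul c _
  abs_le _ hf := abs_integral_mul_le_of_abs_le hvC hf

namespace IsBoundedL1Functional

variable {X : Type*} {m : MeasurableSpace X} {μ : Measure X} {Λ : (X → ℝ) → ℝ} {C : ℝ}

lemma map_sub (hΛ : IsBoundedL1Functional μ Λ C) {f g : X → ℝ} (hf : Integrable f μ)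
    (hg : Integrable g μ) : Λ (f - g) = Λ f - Λ g := by
  rw [eq_sub_iff_add_eq, ← hΛ.map_add _ _ (hf.sub hg) hg, sub_add_cancel]

lemma congr_ae (hΛ : IsBoundedL1Functional μ Λ C) {f g : X → ℝ} (hf : Integrable f μ)
    (hg : Integrable g μ) (hfg : f =ᵐ[μ] g) : Λ f = Λ g := by
  have h := hΛ.abs_le _ (hf.sub hg)
  rw [integral_eq_zero_of_ae (hfg.mono fun x hx => by simp [hx]), mul_zero,
    abs_nonpos_iff, hΛ.map_sub hf hg] at h
  exact sub_eq_zero.mp h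

lemma continuous (hΛ : IsBoundedL1Functional μ Λ C) :
    Continuous fun f : X →₁[μ] ℝ => Λ f := by
  refine (LipschitzWith.of_dist_le_mul (K := C.toNNReal) fun f g => ?_).continuous
  have hfg := (L1.integrable_coeFn f).sub (L1.integrable_coeFn g)
  have hnorm : ‖f - g‖ = ∫ x, |(⇑f - ⇑g) x| ∂μ := by
    rw [L1.norm_eq_integral_norm]
    exact integral_congr_ae ((Lp.coeFn_sub f g).mono fun x hx => by
      simp only [Real.norm_eq_abs, hx])
  rw [Real.dist_eq, ← hΛ.map_sub (L1.integrable_coeFn f) (L1.integrable_coeFn g),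
    dist_eq_norm, hnorm]
  exact (hΛ.abs_le _ hfg).trans
    (mul_le_mul_of_nonneg_right C.le_coe_toNNReal (integral_nonneg fun x => abs_nonneg _))

lemma of_tendsto {ι : Type*} {l : Filter ι} [l.NeBot] {Λs : ι → (X → ℝ) → ℝ}
    (hΛs : ∀ i, IsBoundedL1Functional μ (Λs i) C)
    (hlim : ∀ f, Integrable f μ → Tendsto (fun i => Λs i f) l (𝓝 (Λ f))) :
    IsBoundedL1Functional μ Λ C where
  map_add f g hf hg := tendsto_nhds_unique (hlim _ (hf.add hg)) <| by
    simpa only [(hΛs _).map_add f g hf hg] using (hlim f hf).add (hlim g hg)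
  map_smul c f hf := tendsto_nhds_unique (hlim _ (hf.smul c)) <| by
    simpa only [(hΛs _).map_smul c f hf] using (hlim f hf).const_mul c
  abs_le f hf := le_of_tendsto (hlim f hf).abs (.of_forall fun i => (hΛs i).abs_le f hf)

lemma trim {m₀ : MeasurableSpace X} {μ : Measure X}
    (hΛ : IsBoundedL1Functional μ Λ C) (hm : m ≤ m₀) :
    IsBoundedL1Functional (μ.trim hm) Λ C where
  map_add f g hf hg :=
    hΛ.map_add f g (integrable_of_integrable_trim hm hf) (integrable_of_integrable_trim hm hg)
  map_smul c f hf := hΛ.map_smul c f (integrable_of_integrable_trim hm hf)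
  abs_le f hf := by
    have h := integral_trim_ae hm hf.aestronglyMeasurable.norm
    simp only [Real.norm_eq_abs] at h
    rw [← h]
    exact hΛ.abs_le f (integrable_of_integrable_trim hm hf)

lemma withDensity (hΛ : IsBoundedL1Functional μ Λ C) {ρ : X → ℝ≥0} (hρ : Measurable ρ) :
    IsBoundedL1Functional (μ.withDensity fun x => ρ x) (fun u => Λ fun x => ρ x • u x) C where
  map_add u u' hu hu' := by
    rw [integrable_withDensity_iff_integrable_smul hρ] at hu hu'
    convert hΛ.map_add _ _ hu hu' using 2
    ext x
    exact smul_add (ρ x) (u x) (u' x)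
  map_smul c u hu := by
    rw [integrable_withDensity_iff_integrable_smul hρ] at hu
    convert hΛ.map_smul c _ hu using 2
    ext x
    exact smul_comm (ρ x) c (u x)
  abs_le u hu := by
    rw [integrable_withDensity_iff_integrable_smul hρ] at hu
    rw [integral_withDensity_eq_integral_smul hρ]
    simpa only [NNReal.smul_def, smul_eq_mul, abs_mul, NNReal.abs_eq] using hΛ.abs_le _ hu

lemma exists_memLp_two_density [IsFiniteMeasure μ] (hΛ : IsBoundedL1Functional μ Λ C)
    (hC : 0 ≤ C) : ∃ w : X → ℝ, MemLp w 2 μ ∧ ∀ u, MemLp u 2 μ → Λ u = ∫ x, w x * u x ∂μ := by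
  have hint : ∀ u : Lp ℝ 2 μ, Integrable u μ := fun u => (Lp.memLp u).integrable one_le_two
  let ℓ : StrongDual ℝ (Lp ℝ 2 μ) := LinearMap.mkContinuous
    { toFun := fun u => Λ u
      map_add' := fun u u' => by
        rw [hΛ.congr_ae (hint _) ((hint u).add (hint u')) (Lp.coeFn_add u u'),
          hΛ.map_add _ _ (hint u) (hint u')]
      map_smul' := fun c u => by
        rw [hΛ.congr_ae (hint _) ((hint u).smul c) (Lp.coeFn_smul c u), hΛ.map_smul _ _ (hint u)]
        rfl }
    (C * (μ Set.univ ^ (1 / 2 : ℝ)).toReal) fun u =>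
      ((hΛ.abs_le _ (hint u)).trans
        (mul_le_mul_of_nonneg_left (integral_abs_le_measure_univ_rpow_mul_norm u) hC)).trans_eq
        (mul_assoc _ _ _).symm
  refine ⟨(InnerProductSpace.toDual ℝ (Lp ℝ 2 μ)).symm ℓ, Lp.memLp _, fun u hu => ?_⟩
  rw [hΛ.congr_ae (hu.integrable one_le_two) (hint _) hu.coeFn_toLp.symm]
  change ℓ (hu.toLp u) = _
  rw [← InnerProductSpace.toDual_symm_apply, L2.inner_def]
  refine integral_congr_ae (hu.coeFn_toLp.mono fun x hx => ?_)
  simp [hx, mul_comm]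

lemma exists_bounded_density_of_isFiniteMeasure [IsFiniteMeasure μ]
    (hΛ : IsBoundedL1Functional μ Λ C) (hC : 0 ≤ C) :
    ∃ v : X → ℝ, Measurable v ∧ (∀ x, |v x| ≤ C) ∧
      ∀ f, Integrable f μ → Λ f = ∫ x, v x * f x ∂μ := by
  obtain ⟨w, hw, hwΛ⟩ := hΛ.exists_memLp_two_density hC
  have hind : ∀ (c : ℝ) s, MeasurableSet s → MemLp (s.indicator fun _ => c) 2 μ :=
    fun c s hs => memLp_indicator_const 2 hs c (Or.inr (measure_ne_top μ s))
  have hwC : ∀ᵐ x ∂μ, |w x| ≤ C := by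
    refine ae_abs_le_of_abs_setIntegral_le (hw.integrable one_le_two) fun s hs => ?_
    have h := hΛ.abs_le _ ((hind 1 s hs).integrable one_le_two)
    have h1 : (fun x => |s.indicator (fun _ => (1 : ℝ)) x|) = s.indicator 1 := by
      ext x; by_cases hx : x ∈ s <;> simp [hx]
    rwa [hwΛ _ (hind 1 s hs), integral_mul_indicator_one w hs, h1,
      integral_indicator_one hs] at h
  obtain ⟨v, hv, hvC, hwv⟩ := hw.aestronglyMeasurable.exists_measurable_abs_le_ae_eq hC hwC
  have hvΛ := isBoundedL1Functional_integral_mul (μ := μ) hv.aestronglyMeasurable hvC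
  refine ⟨v, hv, hvC, fun f hf => ?_⟩
  refine Integrable.induction (fun f => Λ f = ∫ x, v x * f x ∂μ) ?_ ?_ ?_ ?_ hf
  · intro c s hs _
    rw [hwΛ _ (hind c s hs)]
    exact integral_congr_ae (hwv.mono fun x hx => by simp only [hx])
  · intro f g _ hf hg hPf hPg
    rw [hΛ.map_add _ _ hf hg, hPf, hPg, hvΛ.map_add _ _ hf hg]
  · exact isClosed_eq hΛ.continuous hvΛ.continuous
  · intro f g hfg hf hPf
    rw [← hΛ.congr_ae hf (hf.congr hfg) hfg, hPf, hvΛ.congr_ae hf (hf.congr hfg) hfg]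

theorem exists_bounded_density [SigmaFinite μ] (hΛ : IsBoundedL1Functional μ Λ C) (hC : 0 ≤ C) :
    ∃ v : X → ℝ, Measurable v ∧ (∀ x, |v x| ≤ C) ∧
      ∀ f, Integrable f μ → Λ f = ∫ x, v x * f x ∂μ := by
  obtain ⟨ρ, hρpos, hρ, hρint⟩ := exists_pos_lintegral_lt_of_sigmaFinite μ one_ne_zero
  have : IsFiniteMeasure (μ.withDensity fun x => ρ x) :=
    isFiniteMeasure_withDensity (hρint.trans ENNReal.one_lt_top).ne
  obtain ⟨v, hv, hvC, hvΛ⟩ := (hΛ.withDensity hρ).exists_bounded_density_of_isFiniteMeasure hC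
  refine ⟨v, hv, hvC, fun f hf => ?_⟩
  have hρf : ∀ x, ρ x • ((ρ x)⁻¹ • f x) = f x := fun x => smul_inv_smul₀ (hρpos x).ne' (f x)
  have hf' : Integrable (fun x => (ρ x)⁻¹ • f x) (μ.withDensity fun x => ρ x) := by
    rw [integrable_withDensity_iff_integrable_smul hρ]
    simpa only [hρf] using hf
  have h := hvΛ _ hf'
  simp only [hρf] at h
  rw [h, integral_withDensity_eq_integral_smul hρ]
  simp only [mul_smul_comm, smul_inv_smul₀ (hρpos _).ne']

end IsBoundedL1Functional

/-- Banach–Alaoglu for `L^∞ = (L¹)^*`, in ultrafilter form. -/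
theorem exists_tendsto_integral_mul_of_abs_le {X : Type*} {m : MeasurableSpace X} (μ : Measure X)
    [SigmaFinite μ] {ι : Type*} (𝒰 : Ultrafilter ι) {φ : ι → X → ℝ} {C : ℝ} (hC : 0 ≤ C)
    (hφ : ∀ i, AEStronglyMeasurable (φ i) μ) (hφC : ∀ i x, |φ i x| ≤ C) :
    ∃ v : X → ℝ, Measurable v ∧ (∀ x, |v x| ≤ C) ∧ ∀ f, Integrable f μ →
      Tendsto (fun i => ∫ x, φ i x * f x ∂μ) 𝒰 (𝓝 (∫ x, v x * f x ∂μ)) := by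
  have hΛs i := isBoundedL1Functional_integral_mul (hφ i) (hφC i)
  have hlim : ∀ f, Integrable f μ → Tendsto (fun i => ∫ x, φ i x * f x ∂μ) 𝒰
      (𝓝 (limUnder (𝒰 : Filter ι) fun i => ∫ x, φ i x * f x ∂μ)) := fun f hf =>
    𝒰.tendsto_limUnder_of_abs_le fun i => (hΛs i).abs_le f hf
  obtain ⟨v, hv, hvC, hvΛ⟩ := (IsBoundedL1Functional.of_tendsto hΛs hlim).exists_bounded_density hC
  exact ⟨v, hv, hvC, fun f hf => hvΛ f hf ▸ hlim f hf⟩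

section SubSigmaAlgebra

variable {X : Type*} {m m₀ : MeasurableSpace X} {μ : Measure X}

theorem exists_measurable_ae_eq_of_integral_mul_condExp (hm : m ≤ m₀) [SigmaFinite (μ.trim hm)]
    {v : X → ℝ} {C : ℝ} (hC : 0 ≤ C) (hv : AEStronglyMeasurable v μ) (hvC : ∀ x, |v x| ≤ C)
    (hinv : ∀ f, Integrable f μ → ∫ x, v x * μ[f|m] x ∂μ = ∫ x, v x * f x ∂μ) :
    ∃ w : X → ℝ, Measurable[m] w ∧ v =ᵐ[μ] w := by
  have := SigmaFinite.of_trim (μ := μ) hm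
  -- `w` represents `f ↦ ∫ v f` on `L¹(m)`: it is the `L^∞` conditional expectation of `v`.
  obtain ⟨w, hw, hwC, hwΛ⟩ :=
    ((isBoundedL1Functional_integral_mul hv hvC).trim hm).exists_bounded_density hC
  have hpair : ∀ f, Integrable f μ → ∫ x, v x * f x ∂μ = ∫ x, w x * f x ∂μ := fun f hf => calc
    ∫ x, v x * f x ∂μ = ∫ x, v x * μ[f|m] x ∂μ := (hinv f hf).symm
    _ = ∫ x, w x * μ[f|m] x ∂μ.trim hm :=
        hwΛ _ (integrable_condExp.trim hm stronglyMeasurable_condExp)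
    _ = ∫ x, w x * μ[f|m] x ∂μ :=
        (integral_trim hm (hw.stronglyMeasurable.mul stronglyMeasurable_condExp)).symm
    _ = ∫ x, w x * f x ∂μ :=
        integral_mul_condExp_of_stronglyMeasurable hm hw.stronglyMeasurable hwC hf
  have hint : ∀ u : X → ℝ, AEStronglyMeasurable u μ → (∀ x, |u x| ≤ C) →
      ∀ s, MeasurableSet s → μ s < ⊤ → IntegrableOn u s μ := fun u hu huC s _ hμs =>
    (integrableOn_const hμs.ne).mono' hu.restrict (.of_forall huC)
  refine ⟨w, hw, ae_eq_of_forall_setIntegral_eq_of_sigmaFinite (hint v hv hvC)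
    (hint w (hw.mono hm le_rfl).aestronglyMeasurable hwC) fun s hs hμs => ?_⟩
  have h1 : Integrable (s.indicator fun _ => (1 : ℝ)) μ :=
    (integrable_indicator_iff hs).2 (integrableOn_const hμs.ne)
  rw [← integral_mul_indicator_one v hs, ← integral_mul_indicator_one w hs, hpair _ h1]

theorem exists_forall_measurable_ae_eq_of_antitone {ms : ℕ → MeasurableSpace X}
    (hms : Antitone ms) {v : X → ℝ} (hv : ∀ n, ∃ w : X → ℝ, Measurable[ms n] w ∧ v =ᵐ[μ] w) :
    ∃ w : X → ℝ, (∀ n, Measurable[ms n] w) ∧ v =ᵐ[μ] w := by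
  choose w hw hvw using hv
  refine ⟨fun x => limsup (fun n => w n x) atTop, fun k => ?_, ?_⟩
  · have hshift : (fun x => limsup (fun n => w n x) atTop)
        = fun x => limsup (fun n => w (n + k) x) atTop :=
      funext fun x => (limsup_nat_add (fun n => w n x) k).symm
    rw [hshift]
    exact Measurable.limsup fun n => (hw (n + k)).mono (hms (Nat.le_add_left k n)) le_rfl
  · filter_upwards [ae_all_iff.2 hvw] with x hx
    simp [← hx]

theorem exists_ae_eq_const_of_forall_measurable {ms : ℕ → MeasurableSpace X}
    (htriv : ∀ A : Set X, (∀ n, MeasurableSet[ms n] A) → μ A = 0 ∨ μ Aᶜ = 0)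
    {w : X → ℝ} (hw : ∀ n, Measurable[ms n] w) : ∃ α : ℝ, w =ᵐ[μ] fun _ => α := by
  refine exists_eventuallyEq_const_of_forall_separating MeasurableSet fun U hU => ?_
  rcases htriv (w ⁻¹' U) fun n => hw n hU with h | h
  · exact .inr (measure_eq_zero_iff_ae_notMem.1 h)
  · exact .inl (ae_iff.2 h)

end SubSigmaAlgebra

section Dynamics

variable {X : Type*} {m : MeasurableSpace X} {μ : Measure X}

lemma MeasureTheory.MeasurePreserving.sigmaFinite_trim_comap {Y : Type*} {mY : MeasurableSpace Y}
    {ν : Measure Y} [SigmaFinite ν]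
    {f : X → Y} (hf : MeasurePreserving f μ ν) : SigmaFinite (μ.trim hf.measurable.comap_le) := by
  refine SigmaFinite.of_map _ (Measurable.of_comap_le le_rfl).aemeasurable ?_
  rw [map_trim_comap hf.measurable, hf.map_eq]
  infer_instance

lemma antitone_comap_iterate {T : X → X} (hT : Measurable T) :
    Antitone fun n => m.comap T^[n] := by
  intro n k hnk
  show m.comap T^[k] ≤ m.comap T^[n]
  rw [← Nat.sub_add_cancel hnk, Function.iterate_add, ← MeasurableSpace.comap_comp]
  exact MeasurableSpace.comap_mono (hT.iterate _).comap_le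

lemma integral_comp_iterate_mul_condExp [SigmaFinite μ] {T : X → X} (hT : MeasurePreserving T μ μ)
    {F : X → ℝ} (hF : Measurable F) {C : ℝ} (hFC : ∀ x, |F x| ≤ C) {f : X → ℝ}
    (hf : Integrable f μ) {n k : ℕ} (hnk : n ≤ k) :
    ∫ x, F (T^[k] x) * μ[f|m.comap T^[n]] x ∂μ = ∫ x, F (T^[k] x) * f x ∂μ := by
  have := (hT.iterate n).sigmaFinite_trim_comap
  have hFk : Measurable[m.comap T^[n]] fun x => F (T^[k] x) := by
    rw [← Nat.sub_add_cancel hnk]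
    simp_rw [Function.iterate_add_apply]
    exact (hF.comp (hT.measurable.iterate _)).comp (comap_measurable _)
  exact integral_mul_condExp_of_stronglyMeasurable _ hFk.stronglyMeasurable (fun x => hFC _) hf

end Dynamics

theorem exact_implies_GLM1_general
    {X : Type*} [m : MeasurableSpace X] (μ : Measure X) [SigmaFinite μ]
    (T : X → X) (hT : MeasurePreserving T μ μ)
    -- exactness: any set measurable w.r.t. every `T⁻ⁿ𝒜` is trivial mod μ
    (hexact : ∀ A : Set X,
      (∀ n : ℕ, MeasurableSet[MeasurableSpace.comap (T^[n]) m] A) →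
      μ A = 0 ∨ μ Aᶜ = 0) :
    ∀ F : X → ℝ, Measurable F → (∃ C, ∀ x, |F x| ≤ C) →
    ∀ g : X → ℝ, Integrable g μ → (∫ x, g x ∂μ) = 0 →
    Tendsto (fun n : ℕ => ∫ x, F (T^[n] x) * g x ∂μ) atTop (nhds 0) := by
  rintro F hF ⟨C₀, hFC₀⟩ g hg hg0
  have hC : 0 ≤ max C₀ 0 := le_max_right C₀ 0
  have hFC : ∀ x, |F x| ≤ max C₀ 0 := fun x => (hFC₀ x).trans (le_max_left C₀ 0)
  rw [tendsto_iff_ultrafilter]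
  intro 𝒰 h𝒰
  obtain ⟨v, hv, hvC, hvlim⟩ := exists_tendsto_integral_mul_of_abs_le μ 𝒰 hC
    (φ := fun n x => F (T^[n] x))
    (fun n => (hF.comp (hT.measurable.iterate n)).aestronglyMeasurable) fun n x => hFC (T^[n] x)
  have hinv n f (hf : Integrable f μ) :
      ∫ x, v x * μ[f|m.comap T^[n]] x ∂μ = ∫ x, v x * f x ∂μ :=
    tendsto_nhds_unique ((hvlim _ integrable_condExp).congr' (h𝒰 (eventually_atTop.2
      ⟨n, fun k hk => integral_comp_iterate_mul_condExp hT hF hFC hf hk⟩))) (hvlim f hf)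
  obtain ⟨w, hw, hvw⟩ := exists_forall_measurable_ae_eq_of_antitone
    (antitone_comap_iterate hT.measurable) fun n =>
      have := (hT.iterate n).sigmaFinite_trim_comap
      exists_measurable_ae_eq_of_integral_mul_condExp _ hC hv.aestronglyMeasurable hvC (hinv n)
  obtain ⟨α, hα⟩ := exists_ae_eq_const_of_forall_measurable hexact hw
  have hvg : ∫ x, v x * g x ∂μ = 0 := calc
    ∫ x, v x * g x ∂μ = ∫ x, α * g x ∂μ :=
      integral_congr_ae ((hvw.trans hα).mono fun x hx => by simp only [hx])
    _ = 0 := by rw [integral_const_mul, hg0, mul_zero]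
  simpa only [hvg] using hvlim g hg

/-- If the measure-preserving system `(X, 𝒜, μ, T)` (with `μ` σ-finite and
`μ(X) = ∞`) is exact, i.e. the tail σ-algebra `⋂ₙ T⁻ⁿ𝒜` is trivial mod `μ`, then for
every `F ∈ L^∞` and every `g ∈ L¹` with `∫ g dμ = 0`, `∫ (F∘Tⁿ)·g dμ → 0`. -/
theorem exact_implies_GLM1
    {X : Type*} [m : MeasurableSpace X] (μ : Measure X) [SigmaFinite μ]
    (T : X → X) (hT : MeasurePreserving T μ μ)
    (hinf : μ Set.univ = ⊤)
    -- exactness: any set measurable w.r.t. every `T⁻ⁿ𝒜` is trivial mod μ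
    (hexact : ∀ A : Set X,
      (∀ n : ℕ, MeasurableSet[MeasurableSpace.comap (T^[n]) m] A) →
      μ A = 0 ∨ μ Aᶜ = 0) :
    ∀ F : X → ℝ, Measurable F → (∃ C, ∀ x, |F x| ≤ C) →
    ∀ g : X → ℝ, Integrable g μ → (∫ x, g x ∂μ) = 0 →
    Tendsto (fun n : ℕ => ∫ x, F (T^[n] x) * g x ∂μ) atTop (nhds 0) :=
  exact_implies_GLM1_general (m := m) μ T hT hexact
end

section
/- The Boole transformation T : ℝ \ {0} → ℝ, T(x) = x − 1/x, preserves Lebesgue measure on ℝ: for every Borel set A, m(T⁻¹A) = m(A). -/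
open MeasureTheory

/-!
The preimage of `A` under `T x = x - x⁻¹` splits into its positive and negative parts, which are
the images of `A` under the two inverse branches `y ↦ (y ± √(y² + 4)) / 2` of `T`. By the
one-dimensional change of variables formula these have measures `∫_A (1 ± y / √(y² + 4)) / 2`,
and the two Jacobians sum to `1`.
-/

open Set Function

noncomputable def boole (x : ℝ) : ℝ := x - x⁻¹

noncomputable def booleInv (ε y : ℝ) : ℝ := (y + ε * √(y ^ 2 + 4)) / 2

theorem boole_booleInv {ε : ℝ} (hε : |ε| = 1) : LeftInverse boole (booleInv ε) := by
  intro y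
  have hε2 : ε ^ 2 = 1 := by rw [← sq_abs, hε, one_pow]
  have hs : √(y ^ 2 + 4) ^ 2 = y ^ 2 + 4 := Real.sq_sqrt (by positivity)
  -- the two roots of `x² - y x - 1` have product `-1`
  have hinv : (booleInv ε y)⁻¹ = (ε * √(y ^ 2 + 4) - y) / 2 := by
    refine inv_eq_of_mul_eq_one_right ?_
    unfold booleInv
    linear_combination (ε ^ 2 * hs + (y ^ 2 + 4) * hε2) / 4
  rw [boole, hinv, booleInv]
  ring

theorem hasDerivAt_booleInv (ε y : ℝ) :
    HasDerivAt (booleInv ε) ((1 + ε * (y / √(y ^ 2 + 4))) / 2) y := by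
  have hsqrt : HasDerivAt (fun y : ℝ => √(y ^ 2 + 4)) (y / √(y ^ 2 + 4)) y := by
    convert ((hasDerivAt_pow 2 y).add_const 4).sqrt (by positivity) using 1
    field_simp
    ring
  exact ((hasDerivAt_id' y).add (hsqrt.const_mul ε)).div_const 2

theorem abs_div_sqrt_sq_add_le_one {c : ℝ} (hc : 0 ≤ c) (y : ℝ) : |y / √(y ^ 2 + c)| ≤ 1 := by
  rw [abs_div, abs_of_nonneg (Real.sqrt_nonneg _)]
  exact div_le_one_of_le₀ (Real.abs_le_sqrt (by linarith)) (Real.sqrt_nonneg _)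

theorem sqrt_boole_sq_add_four {x : ℝ} (hx : x ≠ 0) : √(boole x ^ 2 + 4) = |x + x⁻¹| := by
  rw [← Real.sqrt_sq_eq_abs, boole]
  congr 1
  field_simp
  ring

theorem abs_lt_sqrt_sq_add_four (y : ℝ) : |y| < √(y ^ 2 + 4) :=
  (Real.lt_sqrt (abs_nonneg y)).2 (by rw [sq_abs]; linarith)

theorem range_booleInv_one : range (booleInv 1) = Ioi 0 := by
  refine Subset.antisymm ?_ fun x (hx : 0 < x) => ⟨boole x, ?_⟩
  · rintro _ ⟨y, rfl⟩
    have := abs_lt_sqrt_sq_add_four y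
    simp only [booleInv, mem_Ioi]
    linarith [neg_abs_le y]
  · rw [booleInv, sqrt_boole_sq_add_four hx.ne', abs_of_pos (by positivity), boole]
    ring

theorem range_booleInv_neg_one : range (booleInv (-1)) = Iio 0 := by
  refine Subset.antisymm ?_ fun x (hx : x < 0) => ⟨boole x, ?_⟩
  · rintro _ ⟨y, rfl⟩
    have := abs_lt_sqrt_sq_add_four y
    simp only [booleInv, mem_Iio]
    linarith [le_abs_self y]
  · have : x⁻¹ < 0 := inv_lt_zero.2 hx
    rw [booleInv, sqrt_boole_sq_add_four hx.ne, abs_of_neg (by linarith), boole]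
    ring

theorem measure_eq_inter_Ioi_add_inter_Iio (μ : Measure ℝ) [NullSingletonClass μ] (s : Set ℝ)
    (a : ℝ) :
    μ s = μ (s ∩ Ioi a) + μ (s ∩ Iio a) := by
  rw [← measure_inter_add_sdiff s measurableSet_Ioi, sdiff_eq, compl_Ioi,
    measure_congr ((ae_eq_refl s).inter (Iio_ae_eq_Iic (μ := μ)))]

theorem volume_image_eq_lintegral_abs_deriv {s : Set ℝ} {f f' : ℝ → ℝ} (hs : MeasurableSet s)
    (hf' : ∀ x ∈ s, HasDerivWithinAt f (f' x) s x) (hf : InjOn f s) :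
    volume (f '' s) = ∫⁻ x in s, ENNReal.ofReal |f' x| := by
  simpa using lintegral_image_eq_lintegral_abs_deriv_mul hs hf' hf 1

theorem volume_boole_preimage_inter_range_booleInv {ε : ℝ} (hε : |ε| = 1) {A : Set ℝ}
    (hA : MeasurableSet A) :
    volume (boole ⁻¹' A ∩ range (booleInv ε)) =
      ∫⁻ y in A, ENNReal.ofReal ((1 + ε * (y / √(y ^ 2 + 4))) / 2) := by
  have hinv := boole_booleInv hε
  rw [inter_comm, ← hinv.image_eq, volume_image_eq_lintegral_abs_deriv hA
    (fun y _ => (hasDerivAt_booleInv ε y).hasDerivWithinAt) hinv.injective.injOn]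
  refine setLIntegral_congr_fun hA fun y _ => ?_
  have : |ε * (y / √(y ^ 2 + 4))| ≤ 1 := by
    rw [abs_mul, hε, one_mul]
    exact abs_div_sqrt_sq_add_le_one zero_le_four y
  rw [abs_of_nonneg (by linarith [neg_abs_le (ε * (y / √(y ^ 2 + 4)))])]

/-- The Boole transformation `T(x) = x − 1/x` preserves Lebesgue
measure on `ℝ`: for every Borel set `A`, `m(T⁻¹A) = m(A)`. -/
theorem boole_preserves_lebesgue :
    ∀ A : Set ℝ, MeasurableSet A →
      volume ((fun x : ℝ => x - x⁻¹) ⁻¹' A) = volume A := by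
  intro A hA
  change volume (boole ⁻¹' A) = volume A
  rw [measure_eq_inter_Ioi_add_inter_Iio volume _ 0, ← range_booleInv_one,
    ← range_booleInv_neg_one, volume_boole_preimage_inter_range_booleInv abs_one hA,
    volume_boole_preimage_inter_range_booleInv (by simp) hA, ← lintegral_add_left (by fun_prop),
    ← setLIntegral_one]
  refine setLIntegral_congr_fun hA fun y _ => ?_
  have hr := abs_le.1 (abs_div_sqrt_sq_add_le_one zero_le_four y)
  rw [← ENNReal.ofReal_add (by linarith) (by linarith), ← ENNReal.ofReal_one]
  congr 1
  ring
end

section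
/- Let T : ℝ → ℝ be a translation-invariant map (T(x+1) = T(x)+1) preserving Lebesgue measure m on ℝ, and let T_I : [0,1) → [0,1) be the quotient map T_I(x) = T(x) mod 1, which preserves Lebesgue measure m_I on [0,1). Suppose (I, T_I, m_I) is mixing and T is exact on ℝ (so mean-zero L¹ differences decorrelate: ∫(F∘Tⁿ)h dm → 0 whenever ∫h dm = 0). Then for every bounded ℤ-periodic F : ℝ → ℝ and every g ∈ L¹(ℝ), lim_{n→∞} ∫_ℝ (F∘Tⁿ)·g dm = (∫₀¹ F dm)·(∫_ℝ g dm). -/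
open MeasureTheory Filter Topology

/-! On `[0,1)` the iterates of `T_I = fract ∘ T` are the fractional parts of the iterates
of `T`, so for a `ℤ`-periodic `F` and `g` supported in `[0,1)` the correlation
`∫ (F ∘ Tⁿ) g` is a correlation of the quotient system, handled by mixing. A general
`g ∈ L¹(ℝ)` is `(∫ g) · 𝟙_[0,1)` plus a mean-zero function, whose correlations vanish in
the limit by exactness. -/

lemma Function.Periodic.fract_eq {F : ℝ → ℝ} (hF : Function.Periodic F 1) (y : ℝ) :
    F (Int.fract y) = F y := by
  simpa only [mul_one, Int.self_sub_floor] using hF.sub_int_mul_eq (x := y) ⌊y⌋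

lemma map_add_int_of_map_add_one {T : ℝ → ℝ} (hT : ∀ x, T (x + 1) = T x + 1)
    (x : ℝ) (k : ℤ) : T (x + k) = T x + k := by
  have hper : Function.Periodic (fun y => T y - y) 1 := fun y => by
    simp only [hT]; ring
  have := (hper.int_mul k) x
  simp only [mul_one] at this
  linarith

lemma semiconj_fract_of_map_add_one {T : ℝ → ℝ} (hT : ∀ x, T (x + 1) = T x + 1) :
    Function.Semiconj Int.fract T (fun y => Int.fract (T y)) := fun x => by
  have := map_add_int_of_map_add_one hT (Int.fract x) ⌊x⌋
  rw [Int.fract_add_floor] at this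
  rw [this, Int.fract_add_intCast]

lemma iterate_fract_comp_eq_fract_iterate {T : ℝ → ℝ} (hT : ∀ x, T (x + 1) = T x + 1)
    (n : ℕ) {x : ℝ} (hx : x ∈ Set.Ico (0 : ℝ) 1) :
    (fun y => Int.fract (T y))^[n] x = Int.fract (T^[n] x) := by
  rw [(semiconj_fract_of_map_add_one hT).iterate_right n x, Int.fract_eq_self.2 hx]

lemma integral_comp_iterate_mul_eq_setIntegral_Ico {T F g : ℝ → ℝ}
    (hT : ∀ x, T (x + 1) = T x + 1) (hF : Function.Periodic F 1)
    (hg : ∀ x ∉ Set.Ico (0 : ℝ) 1, g x = 0) (n : ℕ) :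
    ∫ x, F (T^[n] x) * g x =
      ∫ x in Set.Ico (0 : ℝ) 1, F ((fun y => Int.fract (T y))^[n] x) * g x := by
  rw [← integral_indicator measurableSet_Ico]
  refine integral_congr_ae (ae_of_all _ fun x => ?_)
  by_cases hx : x ∈ Set.Ico (0 : ℝ) 1
  · rw [Set.indicator_of_mem hx, iterate_fract_comp_eq_fract_iterate hT n hx, hF.fract_eq]
  · rw [Set.indicator_of_notMem hx]
    simp [hg x hx]

lemma tendsto_integral_mul_of_tendsto_sub {α : Type*} [MeasurableSpace α] {μ : Measure α}
    {φ : ℕ → α → ℝ} {g g₀ : α → ℝ} {C L : ℝ}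
    (hφ : ∀ n, AEStronglyMeasurable (φ n) μ) (hC : ∀ n x, |φ n x| ≤ C)
    (hg : Integrable g μ) (hg₀ : Integrable g₀ μ)
    (h₀ : Tendsto (fun n => ∫ x, φ n x * g₀ x ∂μ) atTop (𝓝 L))
    (h₁ : Tendsto (fun n => ∫ x, φ n x * (g x - g₀ x) ∂μ) atTop (𝓝 0)) :
    Tendsto (fun n => ∫ x, φ n x * g x ∂μ) atTop (𝓝 L) := by
  have hint : ∀ {f : α → ℝ}, Integrable f μ →
      ∀ n, Integrable (fun x => φ n x * f x) μ :=
    fun hf n => hf.bdd_mul (hφ n) (ae_of_all _ fun x => hC n x)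
  refine (add_zero L ▸ h₀.add h₁).congr fun n => ?_
  rw [← integral_add (hint hg₀ n) (hint (f := fun x => g x - g₀ x) (hg.sub hg₀) n)]
  simp only [mul_sub, add_sub_cancel]

/-- Let `T : ℝ → ℝ` preserve Lebesgue measure, commute with integer
translation (`T(x+1) = T(x)+1`), with mixing quotient map `T_I x = fract (T x)` on
`[0,1)`, and satisfying the mean-zero decorrelation coming from exactness.  Then every
bounded `ℤ`-periodic `F` is an equilibrium observable with `ρ(F) = ∫₀¹ F`. -/
theorem periodic_observable_equilibrium
    (T : ℝ → ℝ) (hT : MeasurePreserving T volume volume)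
    (htrans : ∀ x : ℝ, T (x + 1) = T x + 1)
    -- mixing of the quotient system (I, T_I, m_I), T_I x = fract (T x)
    (hmix : ∀ F : ℝ → ℝ, Measurable F → (∃ C, ∀ x, |F x| ≤ C) →
      ∀ g : ℝ → ℝ, Integrable g volume → (∀ x ∉ Set.Ico (0 : ℝ) 1, g x = 0) →
      Tendsto
        (fun n : ℕ => ∫ x in Set.Ico (0 : ℝ) 1, F ((fun y => Int.fract (T y))^[n] x) * g x)
        atTop (nhds ((∫ x in Set.Ico (0 : ℝ) 1, F x) * ∫ x : ℝ, g x)))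
    -- decorrelation of mean-zero L¹ observables (consequence of exactness of T)
    (hGLM1 : ∀ F : ℝ → ℝ, Measurable F → (∃ C, ∀ x, |F x| ≤ C) →
      ∀ h : ℝ → ℝ, Integrable h volume → (∫ x : ℝ, h x) = 0 →
      Tendsto (fun n : ℕ => ∫ x : ℝ, F (T^[n] x) * h x) atTop (nhds 0)) :
    ∀ F : ℝ → ℝ, Measurable F → (∃ C, ∀ x, |F x| ≤ C) →
    (∀ x : ℝ, F (x + 1) = F x) →
    ∀ g : ℝ → ℝ, Integrable g volume →
    Tendsto (fun n : ℕ => ∫ x : ℝ, F (T^[n] x) * g x) atTop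
      (nhds ((∫ x in Set.Ico (0 : ℝ) 1, F x) * ∫ x : ℝ, g x)) := by
  intro F hF hbd hper g hg
  obtain ⟨C, hC⟩ := hbd
  set g₀ := (Set.Ico (0 : ℝ) 1).indicator fun _ => ∫ x, g x
  have hg₀ : Integrable g₀ volume :=
    (integrableOn_const (by simp)).integrable_indicator measurableSet_Ico
  have hg₀_integral : ∫ x, g₀ x = ∫ x, g x := by
    simp [g₀, integral_indicator_const _ measurableSet_Ico]
  have hg₀_support : ∀ x ∉ Set.Ico (0 : ℝ) 1, g₀ x = 0 := fun x hx =>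
    Set.indicator_of_notMem hx _
  have hmix₀ := hmix F hF ⟨C, hC⟩ g₀ hg₀ hg₀_support
  rw [hg₀_integral] at hmix₀
  refine tendsto_integral_mul_of_tendsto_sub
    (fun n => (hF.comp (hT.measurable.iterate n)).aestronglyMeasurable) (fun n x => hC _) hg hg₀
    (hmix₀.congr fun n =>
      (integral_comp_iterate_mul_eq_setIntegral_Ico htrans hper hg₀_support n).symm)
    (hGLM1 F hF ⟨C, hC⟩ _ (hg.sub hg₀) ?_)
  rw [integral_sub hg hg₀, hg₀_integral, sub_self]
end

section
/- Let T : ℝ → ℝ be a measure-preserving map of Lebesgue measure m that is translation-invariant (T(x+1) = T(x)+1) and Markov with respect to the partition {[j, j+1)}_{j∈ℤ} in the sense that the transfer operator P maps L¹(𝒜₀) to itself, where 𝒜₀ is the σ-algebra generated by {[j,j+1)}_{j∈ℤ}. Suppose that for every F₀ ∈ L^∞(𝒜₀) for which the limit m̄(F₀) := lim_{j→∞} (1/(2j)) ∫_{q−j}^{q+j} F₀ dx exists uniformly in q ∈ ℤ, one has ∫(F₀∘Tⁿ)g dm → m̄(F₀)·∫g dm for all g ∈ L¹(𝒜₀). Then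 for every F ∈ L^∞(ℝ) such that ρ(F) := lim_{M→∞} (1/(2M)) ∫_{a−M}^{a+M} F dx exists uniformly in a ∈ ℝ, and for g = 1_{[0,1)}, one has lim_{n→∞} ∫(F∘Tⁿ)g dm = ρ(F)·∫g dm, via the identity ∫(F∘Tⁿ)g dm = ∫ E(F|𝒜₀)·Pⁿg dm and ρ(F) = m̄(E(F|𝒜₀)). -/
open MeasureTheory Filter Set

/-! Test functions `g` that are constant on the cells `[j, j+1)` only see the cell integrals of an
observable, so `∫ F g = ∫ E(F|𝒜₀) g`. Since `P` preserves such `g`, duality gives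
`∫ (F ∘ Tⁿ) g = ∫ F · Pⁿg = ∫ E(F|𝒜₀) · Pⁿg = ∫ (E(F|𝒜₀) ∘ Tⁿ) g`. Integrals of `F` and
`E(F|𝒜₀)` also agree over windows with integer endpoints, so `E(F|𝒜₀)` has uniform window
averages `ρ(F)` and the hypothesis on `𝒜₀`-measurable observables applies to it. -/

/-- Functions measurable for the σ-algebra `𝒜₀` generated by the cells `[j, j+1)`, `j ∈ ℤ`. -/
def IsCellConst (g : ℝ → ℝ) : Prop :=
  ∀ j : ℤ, ∀ x ∈ Ico (j : ℝ) ((j : ℝ) + 1), ∀ y ∈ Ico (j : ℝ) ((j : ℝ) + 1), g x = g y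

/-- The conditional expectation `E(F | 𝒜₀)`; the cells have length one, so no normalisation. -/
noncomputable def cellAverage (F : ℝ → ℝ) (x : ℝ) : ℝ :=
  ∫ y in Ico (⌊x⌋ : ℝ) (⌊x⌋ + 1), F y

lemma isCellConst_iff {g : ℝ → ℝ} : IsCellConst g ↔ ∀ x y, ⌊x⌋ = ⌊y⌋ → g x = g y := by
  refine ⟨fun hg x y hxy => hg ⌊x⌋ x ⟨Int.floor_le x, Int.lt_floor_add_one x⟩ y ?_,
    fun hg j x hx y hy => hg x y ?_⟩
  · rw [hxy]; exact ⟨Int.floor_le y, Int.lt_floor_add_one y⟩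
  · rw [Int.floor_eq_iff.2 hx, Int.floor_eq_iff.2 hy]

lemma isCellConst_indicator_Ico_zero_one :
    IsCellConst ((Ico (0 : ℝ) 1).indicator fun _ => 1) := by
  refine isCellConst_iff.2 fun x y hxy => ?_
  simp only [indicator, ← Int.floor_eq_zero_iff, hxy]

lemma IsCellConst.eq_intCast {h : ℝ → ℝ} (hh : IsCellConst h) {k : ℤ} {x : ℝ}
    (hx : x ∈ Ico (k : ℝ) (k + 1)) : h x = h k :=
  hh k x hx k ⟨le_rfl, lt_add_one _⟩

lemma integral_eq_tsum_setIntegral_Ico_intCast {f : ℝ → ℝ} (hf : Integrable f) :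
    ∫ x, f x = ∑' k : ℤ, ∫ x in Ico (k : ℝ) (k + 1), f x := by
  rw [← setIntegral_univ, ← iUnion_Ico_intCast ℝ]
  exact integral_iUnion (fun _ => measurableSet_Ico) (pairwise_disjoint_Ico_intCast ℝ)
    (by rw [iUnion_Ico_intCast]; exact hf.integrableOn)

lemma setIntegral_Ico_intCast_mul_of_isCellConst (f : ℝ → ℝ) {h : ℝ → ℝ} (hh : IsCellConst h)
    (k : ℤ) : ∫ x in Ico (k : ℝ) (k + 1), f x * h x = (∫ x in Ico (k : ℝ) (k + 1), f x) * h k := by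
  rw [← integral_mul_const]
  exact setIntegral_congr_fun measurableSet_Ico fun x hx => by rw [hh.eq_intCast hx]

section CellIntegrals

variable {f f' : ℝ → ℝ}

lemma integral_mul_eq_of_setIntegral_Ico_intCast_eq
    (hcell : ∀ k : ℤ, ∫ x in Ico (k : ℝ) (k + 1), f x = ∫ x in Ico (k : ℝ) (k + 1), f' x)
    {h : ℝ → ℝ} (hh : IsCellConst h)
    (hfh : Integrable fun x => f x * h x) (hf'h : Integrable fun x => f' x * h x) :
    ∫ x, f x * h x = ∫ x, f' x * h x := by
  simp only [integral_eq_tsum_setIntegral_Ico_intCast hfh,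
    integral_eq_tsum_setIntegral_Ico_intCast hf'h,
    setIntegral_Ico_intCast_mul_of_isCellConst _ hh, hcell]

lemma setIntegral_Icc_intCast_eq_of_setIntegral_Ico_intCast_eq
    (hcell : ∀ k : ℤ, ∫ x in Ico (k : ℝ) (k + 1), f x = ∫ x in Ico (k : ℝ) (k + 1), f' x)
    (hf : LocallyIntegrable f) (hf' : LocallyIntegrable f') (m : ℤ) (n : ℕ) :
    ∫ x in Icc (m : ℝ) (m + n), f x = ∫ x in Icc (m : ℝ) (m + n), f' x := by
  have hle : (m : ℝ) ≤ m + n := by simp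
  have hcell' (i : ℕ) : ∫ x in (m + i : ℝ)..(m + (i + 1 : ℕ)), f x
      = ∫ x in (m + i : ℝ)..(m + (i + 1 : ℕ)), f' x := by
    have hlo : (m + i : ℝ) = ((m + i : ℤ) : ℝ) := by push_cast; ring
    have hhi : (m + (i + 1 : ℕ) : ℝ) = ((m + i : ℤ) : ℝ) + 1 := by push_cast; ring
    have hi : ((m + i : ℤ) : ℝ) ≤ ((m + i : ℤ) : ℝ) + 1 := by linarith
    rw [hlo, hhi, intervalIntegral.integral_of_le hi, intervalIntegral.integral_of_le hi,
      ← integral_Ico_eq_integral_Ioc, ← integral_Ico_eq_integral_Ioc]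
    exact hcell _
  rw [integral_Icc_eq_integral_Ioc, integral_Icc_eq_integral_Ioc,
    ← intervalIntegral.integral_of_le hle, ← intervalIntegral.integral_of_le hle]
  have hsum (g : ℝ → ℝ) (hg : LocallyIntegrable g) :
      ∑ i ∈ Finset.range n, ∫ x in (m + i : ℝ)..(m + (i + 1 : ℕ)), g x
        = ∫ x in (m : ℝ)..(m + n), g x := by
    simpa using intervalIntegral.sum_integral_adjacent_intervals (f := g) (μ := volume)
      (a := fun i : ℕ => (m : ℝ) + i) (n := n)
      fun _ _ => (hg.integrableOn_isCompact isCompact_uIcc).intervalIntegrable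
  rw [← hsum f hf, ← hsum f' hf']
  exact Finset.sum_congr rfl fun i _ => hcell' i

end CellIntegrals

section CellAverage

variable (F : ℝ → ℝ)

lemma cellAverage_eq_of_mem {k : ℤ} {x : ℝ} (hx : x ∈ Ico (k : ℝ) (k + 1)) :
    cellAverage F x = ∫ y in Ico (k : ℝ) (k + 1), F y := by
  rw [cellAverage, Int.floor_eq_iff.2 hx]

lemma isCellConst_cellAverage : IsCellConst (cellAverage F) :=
  isCellConst_iff.2 fun x y hxy => by rw [cellAverage, cellAverage, hxy]

lemma measurable_cellAverage : Measurable (cellAverage F) :=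
  (measurable_from_top (f := fun k : ℤ => ∫ y in Ico (k : ℝ) (k + 1), F y)).comp
    Int.measurable_floor

lemma abs_cellAverage_le {C : ℝ} (hC : ∀ x, |F x| ≤ C) (x : ℝ) : |cellAverage F x| ≤ C := by
  simpa [cellAverage] using norm_setIntegral_le_of_norm_le_const
    (measure_Ico_lt_top (μ := volume) (a := (⌊x⌋ : ℝ)) (b := ⌊x⌋ + 1))
    fun y _ => (Real.norm_eq_abs (F y)).trans_le (hC y)

lemma setIntegral_Ico_intCast_cellAverage (k : ℤ) :
    ∫ x in Ico (k : ℝ) (k + 1), cellAverage F x = ∫ x in Ico (k : ℝ) (k + 1), F x := by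
  rw [setIntegral_congr_fun measurableSet_Ico fun x hx => cellAverage_eq_of_mem F hx]
  simp

end CellAverage

section Bounded

variable {F : ℝ → ℝ} {C : ℝ}

lemma locallyIntegrable_of_abs_le (hF : Measurable F) (hC : ∀ x, |F x| ≤ C) :
    LocallyIntegrable F :=
  locallyIntegrable_iff.2 fun _ hk => Measure.integrableOn_of_bounded hk.measure_lt_top.ne
    hF.aestronglyMeasurable (Eventually.of_forall fun x => (Real.norm_eq_abs _).trans_le (hC x))

lemma integrable_mul_of_abs_le (hF : Measurable F) (hC : ∀ x, |F x| ≤ C) {h : ℝ → ℝ}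
    (hh : Integrable h) : Integrable fun x => F x * h x :=
  hh.bdd_mul hF.aestronglyMeasurable
    (Eventually.of_forall fun x => (Real.norm_eq_abs _).trans_le (hC x))

lemma setIntegral_Icc_intCast_sub_add_cellAverage (hF : Measurable F) (hC : ∀ x, |F x| ≤ C)
    (q : ℤ) (j : ℕ) :
    ∫ x in Icc ((q : ℝ) - j) (q + j), cellAverage F x = ∫ x in Icc ((q : ℝ) - j) (q + j), F x := by
  have hlo : (q : ℝ) - j = ((q - j : ℤ) : ℝ) := by push_cast; ring
  have hhi : (q : ℝ) + j = ((q - j : ℤ) : ℝ) + (2 * j : ℕ) := by push_cast; ring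
  rw [hlo, hhi]
  exact setIntegral_Icc_intCast_eq_of_setIntegral_Ico_intCast_eq
    (setIntegral_Ico_intCast_cellAverage F)
    (locallyIntegrable_of_abs_le (measurable_cellAverage F) (abs_cellAverage_le F hC))
    (locallyIntegrable_of_abs_le hF hC) _ _

lemma cellAverage_window_average_uniform (hF : Measurable F) (hC : ∀ x, |F x| ≤ C) {ρ : ℝ}
    (hρ : ∀ ε > 0, ∃ M₀ : ℝ, ∀ a : ℝ, ∀ M : ℝ, M₀ ≤ M → 0 < M →
      |(∫ x in Icc (a - M) (a + M), F x) / (2 * M) - ρ| ≤ ε) :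
    ∀ ε > 0, ∃ J : ℕ, ∀ q : ℤ, ∀ j : ℕ, J ≤ j → 0 < j →
      |(∫ x in Icc ((q : ℝ) - j) ((q : ℝ) + j), cellAverage F x) / (2 * (j : ℝ)) - ρ| ≤ ε := by
  intro ε hε
  obtain ⟨M₀, hM₀⟩ := hρ ε hε
  refine ⟨⌈M₀⌉₊, fun q j hJ hj => ?_⟩
  rw [setIntegral_Icc_intCast_sub_add_cellAverage hF hC]
  exact hM₀ q j ((Nat.le_ceil M₀).trans (by exact_mod_cast hJ)) (by exact_mod_cast hj)

end Bounded

section Iterates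

variable {T : ℝ → ℝ} {P : (ℝ → ℝ) → ℝ → ℝ}

lemma integrable_and_isCellConst_iterate
    (hPMarkov : ∀ g : ℝ → ℝ, Integrable g → IsCellConst g → Integrable (P g) ∧ IsCellConst (P g))
    (n : ℕ) {h : ℝ → ℝ} (hh : Integrable h) (hc : IsCellConst h) :
    Integrable (P^[n] h) ∧ IsCellConst (P^[n] h) := by
  induction n generalizing h with
  | zero => exact ⟨hh, hc⟩
  | succ n ih =>
    obtain ⟨hPh, hPc⟩ := hPMarkov h hh hc
    exact ih hPh hPc

lemma integral_comp_iterate_mul_eq (hT : Measurable T)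
    (hPdual : ∀ F : ℝ → ℝ, Measurable F → (∃ C, ∀ x, |F x| ≤ C) →
      ∀ g : ℝ → ℝ, Integrable g → ∫ x, F (T x) * g x = ∫ x, F x * P g x)
    (hPMarkov : ∀ g : ℝ → ℝ, Integrable g → IsCellConst g → Integrable (P g) ∧ IsCellConst (P g))
    (n : ℕ) {G : ℝ → ℝ} (hG : Measurable G) (hGb : ∃ C, ∀ x, |G x| ≤ C)
    {h : ℝ → ℝ} (hh : Integrable h) (hc : IsCellConst h) :
    ∫ x, G (T^[n] x) * h x = ∫ x, G x * P^[n] h x := by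
  induction n generalizing h with
  | zero => rfl
  | succ n ih =>
    obtain ⟨hPh, hPc⟩ := hPMarkov h hh hc
    obtain ⟨C, hC⟩ := hGb
    rw [Function.iterate_succ_apply, ← ih hPh hPc]
    exact hPdual _ (hG.comp (hT.iterate n)) ⟨C, fun x => hC _⟩ h hh

end Iterates

theorem random_walk_equilibrium_general
    (T : ℝ → ℝ) (hT : MeasurePreserving T volume volume)
    (P : (ℝ → ℝ) → (ℝ → ℝ))
    -- P is the Perron–Frobenius operator of T
    (hPdual : ∀ F : ℝ → ℝ, Measurable F → (∃ C, ∀ x, |F x| ≤ C) →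
      ∀ g : ℝ → ℝ, Integrable g volume →
      (∫ x : ℝ, F (T x) * g x) = ∫ x : ℝ, F x * P g x)
    -- Markov property: P maps L¹(𝒜₀) to itself
    (hPMarkov : ∀ g : ℝ → ℝ, Integrable g volume →
      (∀ j : ℤ, ∀ x ∈ Set.Ico (j : ℝ) ((j : ℝ) + 1),
        ∀ y ∈ Set.Ico (j : ℝ) ((j : ℝ) + 1), g x = g y) →
      Integrable (P g) volume ∧
      (∀ j : ℤ, ∀ x ∈ Set.Ico (j : ℝ) ((j : ℝ) + 1),
        ∀ y ∈ Set.Ico (j : ℝ) ((j : ℝ) + 1), P g x = P g y))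
    -- hypothesis: convergence for 𝒜₀-measurable observables with uniform averages
    (hA0 : ∀ F₀ : ℝ → ℝ, Measurable F₀ → (∃ C, ∀ x, |F₀ x| ≤ C) →
      (∀ j : ℤ, ∀ x ∈ Set.Ico (j : ℝ) ((j : ℝ) + 1),
        ∀ y ∈ Set.Ico (j : ℝ) ((j : ℝ) + 1), F₀ x = F₀ y) →
      ∀ mbar : ℝ,
      (∀ ε > 0, ∃ J : ℕ, ∀ q : ℤ, ∀ j : ℕ, J ≤ j → 0 < j →
        |(∫ x in Set.Icc ((q : ℝ) - j) ((q : ℝ) + j), F₀ x) / (2 * (j : ℝ)) - mbar| ≤ ε) →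
      ∀ g : ℝ → ℝ, Integrable g volume →
      (∀ j : ℤ, ∀ x ∈ Set.Ico (j : ℝ) ((j : ℝ) + 1),
        ∀ y ∈ Set.Ico (j : ℝ) ((j : ℝ) + 1), g x = g y) →
      Tendsto (fun n : ℕ => ∫ x : ℝ, F₀ (T^[n] x) * g x) atTop
        (nhds (mbar * ∫ x : ℝ, g x))) :
    -- conclusion: for general F with uniform window averages, tested on g = 1_{[0,1)}
    ∀ F : ℝ → ℝ, Measurable F → (∃ C, ∀ x, |F x| ≤ C) →
    ∀ ρF : ℝ,
    (∀ ε > 0, ∃ M₀ : ℝ, ∀ a : ℝ, ∀ M : ℝ, M₀ ≤ M → 0 < M →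
      |(∫ x in Set.Icc (a - M) (a + M), F x) / (2 * M) - ρF| ≤ ε) →
    Tendsto
      (fun n : ℕ => ∫ x : ℝ, F (T^[n] x) *
        (Set.Ico (0 : ℝ) 1).indicator (fun _ => (1 : ℝ)) x) atTop
      (nhds (ρF * ∫ x : ℝ, (Set.Ico (0 : ℝ) 1).indicator (fun _ => (1 : ℝ)) x)) := by
  intro F hF ⟨C, hC⟩ ρF hρ
  have hA := measurable_cellAverage F
  have hAC := abs_cellAverage_le F hC
  set g : ℝ → ℝ := (Set.Ico (0 : ℝ) 1).indicator fun _ => 1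
  have hg : Integrable g := (integrable_indicator_iff measurableSet_Ico).2
    (integrableOn_const measure_Ico_lt_top.ne)
  have hgc : IsCellConst g := isCellConst_indicator_Ico_zero_one
  have hcomp (n : ℕ) : ∫ x, F (T^[n] x) * g x = ∫ x, cellAverage F (T^[n] x) * g x := by
    obtain ⟨hPg, hPgc⟩ := integrable_and_isCellConst_iterate hPMarkov n hg hgc
    rw [integral_comp_iterate_mul_eq hT.measurable hPdual hPMarkov n hF ⟨C, hC⟩ hg hgc,
      integral_comp_iterate_mul_eq hT.measurable hPdual hPMarkov n hA ⟨C, hAC⟩ hg hgc]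
    exact integral_mul_eq_of_setIntegral_Ico_intCast_eq
      (fun k => (setIntegral_Ico_intCast_cellAverage F k).symm) hPgc
      (integrable_mul_of_abs_le hF hC hPg) (integrable_mul_of_abs_le hA hAC hPg)
  exact (hA0 (cellAverage F) hA ⟨C, hAC⟩ (isCellConst_cellAverage F) ρF
    (cellAverage_window_average_uniform hF hC hρ) g hg hgc).congr fun n => (hcomp n).symm

/-- random walks: Let `T : ℝ → ℝ` preserve Lebesgue measure, be
translation-invariant, and Markov w.r.t. the partition `{[j,j+1)}` in the sense that
its transfer operator `P` preserves `𝒜₀`-measurability (functions constant on each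
`[j,j+1)`).  If every bounded `𝒜₀`-measurable `F₀` whose window averages
`(1/2j)∫_{q−j}^{q+j} F₀` converge uniformly in `q ∈ ℤ` satisfies
`∫(F₀∘Tⁿ)g → m̄(F₀)·∫g` for all `g ∈ L¹(𝒜₀)`, then every bounded measurable
`F : ℝ → ℝ` whose window averages `(1/2M)∫_{a−M}^{a+M} F` converge uniformly in
`a ∈ ℝ` satisfies `∫(F∘Tⁿ)·1_{[0,1)} dm → ρ(F)·∫1_{[0,1)} dm`. -/
theorem random_walk_equilibrium
    (T : ℝ → ℝ) (hT : MeasurePreserving T volume volume)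
    (htrans : ∀ x : ℝ, T (x + 1) = T x + 1)
    (P : (ℝ → ℝ) → (ℝ → ℝ))
    -- P is the Perron–Frobenius operator of T
    (hPdual : ∀ F : ℝ → ℝ, Measurable F → (∃ C, ∀ x, |F x| ≤ C) →
      ∀ g : ℝ → ℝ, Integrable g volume →
      (∫ x : ℝ, F (T x) * g x) = ∫ x : ℝ, F x * P g x)
    -- Markov property: P maps L¹(𝒜₀) to itself
    (hPMarkov : ∀ g : ℝ → ℝ, Integrable g volume →
      (∀ j : ℤ, ∀ x ∈ Set.Ico (j : ℝ) ((j : ℝ) + 1),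
        ∀ y ∈ Set.Ico (j : ℝ) ((j : ℝ) + 1), g x = g y) →
      Integrable (P g) volume ∧
      (∀ j : ℤ, ∀ x ∈ Set.Ico (j : ℝ) ((j : ℝ) + 1),
        ∀ y ∈ Set.Ico (j : ℝ) ((j : ℝ) + 1), P g x = P g y))
    -- hypothesis: convergence for 𝒜₀-measurable observables with uniform averages
    (hA0 : ∀ F₀ : ℝ → ℝ, Measurable F₀ → (∃ C, ∀ x, |F₀ x| ≤ C) →
      (∀ j : ℤ, ∀ x ∈ Set.Ico (j : ℝ) ((j : ℝ) + 1),
        ∀ y ∈ Set.Ico (j : ℝ) ((j : ℝ) + 1), F₀ x = F₀ y) →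
      ∀ mbar : ℝ,
      (∀ ε > 0, ∃ J : ℕ, ∀ q : ℤ, ∀ j : ℕ, J ≤ j → 0 < j →
        |(∫ x in Set.Icc ((q : ℝ) - j) ((q : ℝ) + j), F₀ x) / (2 * (j : ℝ)) - mbar| ≤ ε) →
      ∀ g : ℝ → ℝ, Integrable g volume →
      (∀ j : ℤ, ∀ x ∈ Set.Ico (j : ℝ) ((j : ℝ) + 1),
        ∀ y ∈ Set.Ico (j : ℝ) ((j : ℝ) + 1), g x = g y) →
      Tendsto (fun n : ℕ => ∫ x : ℝ, F₀ (T^[n] x) * g x) atTop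
        (nhds (mbar * ∫ x : ℝ, g x))) :
    -- conclusion: for general F with uniform window averages, tested on g = 1_{[0,1)}
    ∀ F : ℝ → ℝ, Measurable F → (∃ C, ∀ x, |F x| ≤ C) →
    ∀ ρF : ℝ,
    (∀ ε > 0, ∃ M₀ : ℝ, ∀ a : ℝ, ∀ M : ℝ, M₀ ≤ M → 0 < M →
      |(∫ x in Set.Icc (a - M) (a + M), F x) / (2 * M) - ρF| ≤ ε) →
    Tendsto
      (fun n : ℕ => ∫ x : ℝ, F (T^[n] x) *
        (Set.Ico (0 : ℝ) 1).indicator (fun _ => (1 : ℝ)) x) atTop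
      (nhds (ρF * ∫ x : ℝ, (Set.Ico (0 : ℝ) 1).indicator (fun _ => (1 : ℝ)) x)) :=
  random_walk_equilibrium_general T hT P hPdual hPMarkov hA0
end
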